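/- arXiv:2507.23363 — 2 statements merged into one kernel-verified Lean document; each statement's English description precedes it below -/
import Mathlib

section
/- Suppose (N+α)/N = q < p < (N+2s+α)/N and that V, f, g satisfy (V), (f), (g). Then for any a > 0 the functional J is bounded from below on S(a), and J is coercive on S(a): for every sequence {u_n} ⊂ S(a) with ‖u_n‖ → ∞ one has J(u_n) → +∞. -/
open MeasureTheory Filter Topology
open scoped ENNReal

noncomputable section

/-- `ℝ^N`. -/
abbrev RN (N : ℕ) : Type := EuclideanSpace ℝ (Fin N)

/-- The Riesz potential constant `A_α = Γ((N−α)/2) / (Γ(α/2) π^{N/2} 2^α)`. -/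
def rieszA (N : ℕ) (α : ℝ) : ℝ :=
  Real.Gamma (((N : ℝ) - α) / 2) /
    (Real.Gamma (α / 2) * Real.pi ^ ((N : ℝ) / 2) * (2 : ℝ) ^ α)

/-- The squared Gagliardo energy `‖u‖² = (C(N,s)/2) ∫∫ |u(x)−u(y)|²/|x−y|^{N+2s}`,
as an extended nonnegative real. -/
def gagSq (N : ℕ) (s Cns : ℝ) (u : RN N → ℝ) : ℝ≥0∞ :=
  ENNReal.ofReal (Cns / 2) *
    ∫⁻ x : RN N, ∫⁻ y : RN N,
      ENNReal.ofReal (|u x - u y| ^ 2 / ‖x - y‖ ^ ((N : ℝ) + 2 * s))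

/-- The squared Gagliardo energy `‖u‖²` as a real number. -/
def gnormSq (N : ℕ) (s Cns : ℝ) (u : RN N → ℝ) : ℝ := (gagSq N s Cns u).toReal

/-- The Gagliardo energy norm `‖u‖`. -/
def gnorm (N : ℕ) (s Cns : ℝ) (u : RN N → ℝ) : ℝ := Real.sqrt (gnormSq N s Cns u)

/-- The fractional Sobolev space `H^s(ℝ^N) = {u ∈ L² : ‖u‖ < ∞}`. -/
def HsSet (N : ℕ) (s Cns : ℝ) : Set (RN N → ℝ) :=
  {u | MemLp u 2 (volume : Measure (RN N)) ∧ gagSq N s Cns u < ⊤}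

/-- The Riesz interaction `D_α(h₁, h₂) = A_α ∫∫ h₁(x) h₂(y) |x−y|^{α−N}`. -/
def rieszD (N : ℕ) (α : ℝ) (h₁ h₂ : RN N → ℝ) : ℝ :=
  rieszA N α *
    (∫⁻ x : RN N, ∫⁻ y : RN N,
      ENNReal.ofReal (h₁ x * h₂ y * ‖x - y‖ ^ (α - (N : ℝ)))).toReal

/-- `Q(u) = D_α(f|u|^q, f|u|^q)`. -/
def Qf (N : ℕ) (α : ℝ) (f : RN N → ℝ) (q : ℝ) (u : RN N → ℝ) : ℝ :=
  rieszD N α (fun x => f x * |u x| ^ q) (fun x => f x * |u x| ^ q)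

/-- The energy functional
`J(u) = ‖u‖²/2 + (1/2)∫ V u² − Q(u)/(2q) − P(u)/(2p)`. -/
def Jfun (N : ℕ) (s Cns α : ℝ) (V f g : RN N → ℝ) (q p : ℝ) (u : RN N → ℝ) : ℝ :=
  (1 / 2) * gnormSq N s Cns u + (1 / 2) * (∫ x : RN N, V x * (u x) ^ 2)
    - Qf N α f q u / (2 * q) - Qf N α g p u / (2 * p)

/-- The mass constraint sphere `S(a) = {u ∈ H^s : ∫ u² = a}`. -/
def Sset (N : ℕ) (s Cns : ℝ) (a : ℝ) : Set (RN N → ℝ) :=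
  {u | u ∈ HsSet N s Cns ∧ (∫ x : RN N, (u x) ^ 2) = a}

/-- `m(a) = inf_{u ∈ S(a)} J(u)`. -/
def mval (N : ℕ) (s Cns α : ℝ) (V f g : RN N → ℝ) (q p a : ℝ) : ℝ :=
  sInf (Jfun N s Cns α V f g q p '' Sset N s Cns a)

/-- The limit energy functional
`J_∞(u) = ‖u‖²/2 + (V_∞/2)∫ u² − (f_∞²/(2q)) D_α(|u|^q,|u|^q) − (g_∞²/(2p)) D_α(|u|^p,|u|^p)`. -/
def Jinf (N : ℕ) (s Cns α : ℝ) (Vinf finf ginf : ℝ) (q p : ℝ) (u : RN N → ℝ) : ℝ :=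
  (1 / 2) * gnormSq N s Cns u + (Vinf / 2) * (∫ x : RN N, (u x) ^ 2)
    - (finf ^ 2 / (2 * q)) * rieszD N α (fun x => |u x| ^ q) (fun x => |u x| ^ q)
    - (ginf ^ 2 / (2 * p)) * rieszD N α (fun x => |u x| ^ p) (fun x => |u x| ^ p)

/-- `m_∞(a) = inf_{u ∈ S(a)} J_∞(u)`. -/
def mvalInf (N : ℕ) (s Cns α : ℝ) (Vinf finf ginf : ℝ) (q p a : ℝ) : ℝ :=
  sInf (Jinf N s Cns α Vinf finf ginf q p '' Sset N s Cns a)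

/-- The energy functional with the extra autonomous `k`-term:
`I(u) = ‖u‖²/2 + (1/2)∫ V u² − Q(u)/(2q) − D_α(|u|^k,|u|^k)/(2k) − P(u)/(2p)`. -/
def Ifun (N : ℕ) (s Cns α : ℝ) (V f g : RN N → ℝ) (q k p : ℝ) (u : RN N → ℝ) : ℝ :=
  (1 / 2) * gnormSq N s Cns u + (1 / 2) * (∫ x : RN N, V x * (u x) ^ 2)
    - Qf N α f q u / (2 * q)
    - rieszD N α (fun x => |u x| ^ k) (fun x => |u x| ^ k) / (2 * k)
    - Qf N α g p u / (2 * p)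

/-- `(u, λ)` is a weak solution of
`(−Δ)^s u + V u = λ u + f (I_α * (f|u|^q)) |u|^{q−2} u + g (I_α * (g|u|^p)) |u|^{p−2} u`. -/
def isWeakSol (N : ℕ) (s Cns α : ℝ) (V f g : RN N → ℝ) (q p : ℝ)
    (u : RN N → ℝ) (lam : ℝ) : Prop :=
  ∀ φ ∈ HsSet N s Cns,
    (Cns / 2) * (∫ x : RN N, ∫ y : RN N,
        (u x - u y) * (φ x - φ y) / ‖x - y‖ ^ ((N : ℝ) + 2 * s))
      + (∫ x : RN N, V x * u x * φ x)
    = lam * (∫ x : RN N, u x * φ x)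
      + rieszA N α * (∫ x : RN N, ∫ y : RN N,
          f x * f y * |u y| ^ q * |u x| ^ (q - 2) * u x * φ x * ‖x - y‖ ^ (α - (N : ℝ)))
      + rieszA N α * (∫ x : RN N, ∫ y : RN N,
          g x * g y * |u y| ^ p * |u x| ^ (p - 2) * u x * φ x * ‖x - y‖ ^ (α - (N : ℝ)))

/-- `(u, λ)` is a weak solution of the equation with the additional autonomous `k`-term
`(−Δ)^s u + V u = λ u + f (I_α * (f|u|^q)) |u|^{q−2} u + (I_α * |u|^k) |u|^{k−2} u
  + g (I_α * (g|u|^p)) |u|^{p−2} u`. -/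
def isWeakSolK (N : ℕ) (s Cns α : ℝ) (V f g : RN N → ℝ) (q k p : ℝ)
    (u : RN N → ℝ) (lam : ℝ) : Prop :=
  ∀ φ ∈ HsSet N s Cns,
    (Cns / 2) * (∫ x : RN N, ∫ y : RN N,
        (u x - u y) * (φ x - φ y) / ‖x - y‖ ^ ((N : ℝ) + 2 * s))
      + (∫ x : RN N, V x * u x * φ x)
    = lam * (∫ x : RN N, u x * φ x)
      + rieszA N α * (∫ x : RN N, ∫ y : RN N,
          f x * f y * |u y| ^ q * |u x| ^ (q - 2) * u x * φ x * ‖x - y‖ ^ (α - (N : ℝ)))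
      + rieszA N α * (∫ x : RN N, ∫ y : RN N,
          |u y| ^ k * |u x| ^ (k - 2) * u x * φ x * ‖x - y‖ ^ (α - (N : ℝ)))
      + rieszA N α * (∫ x : RN N, ∫ y : RN N,
          g x * g y * |u y| ^ p * |u x| ^ (p - 2) * u x * φ x * ‖x - y‖ ^ (α - (N : ℝ)))

/-!
At the critical exponent `q = (N+α)/N` the Gagliardo–Nirenberg exponent `γ_{q,s}` vanishes, so
`Q(u) ≤ f_max² C_q a^q` is bounded on `S(a)`. For `q < p < (N+2s+α)/N` the power of `‖u‖` in the
bound for `P(u)` is `β = 2pγ_{p,s} = (Np−N−α)/s ∈ [0, 2)`, so by Young's inequality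
`P(u)/(2p) ≤ ‖u‖²/4 + K`. As `V ≥ 0`, this gives `J(u) ≥ ‖u‖²/4 − K'` on `S(a)`.
-/

lemma rieszA_nonneg {N : ℕ} {α : ℝ} (hα0 : 0 < α) (hαN : α < N) : 0 ≤ rieszA N α := by
  have := Real.Gamma_pos_of_pos (s := ((N : ℝ) - α) / 2) (by linarith)
  have := Real.Gamma_pos_of_pos (s := α / 2) (by linarith)
  have := Real.rpow_pos_of_pos Real.pi_pos ((N : ℝ) / 2)
  unfold rieszA
  positivity

lemma toReal_le_toReal_mul_of_mul_le_of_le_mul {a b c C : ℝ≥0∞} (hc : c ≠ 0) (hC : C ≠ ⊤)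
    (hlow : c * b ≤ a) (hup : a ≤ C * b) : a.toReal ≤ C.toReal * b.toReal := by
  rcases eq_or_ne b ⊤ with rfl | hb
  · rw [ENNReal.mul_top hc, top_le_iff] at hlow
    simp [hlow]
  · rw [← ENNReal.toReal_mul]
    exact ENNReal.toReal_mono (ENNReal.mul_ne_top hC hb) hup

lemma lintegral_lintegral_const_mul {X Y : Type*} [MeasurableSpace X] [MeasurableSpace Y]
    {μ : Measure X} {ν : Measure Y} {c : ℝ≥0∞} (hc : c ≠ ⊤) (F : X → Y → ℝ≥0∞) :
    ∫⁻ x, ∫⁻ y, c * F x y ∂ν ∂μ = c * ∫⁻ x, ∫⁻ y, F x y ∂ν ∂μ := by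
  simp_rw [lintegral_const_mul' _ _ hc]

/-- The lower bound `m > 0` matters: `rieszD` is the `toReal` of a lintegral, hence `0` when the
integral diverges, and `F ≥ m` makes the left side diverge whenever the right side does. -/
lemma rieszD_mul_le {N : ℕ} {α m M : ℝ} {F h : RN N → ℝ} (hA : 0 ≤ rieszA N α) (hm : 0 < m)
    (hh : ∀ x, 0 ≤ h x) (hlb : ∀ x, m ≤ F x) (hub : ∀ x, F x ≤ M) :
    rieszD N α (fun x => F x * h x) (fun x => F x * h x) ≤ M ^ 2 * rieszD N α h h := by
  set k : RN N → RN N → ℝ := fun x y => h x * h y * ‖x - y‖ ^ (α - (N : ℝ))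
  have hk : ∀ x y, 0 ≤ k x y := fun x y => by have := hh x; have := hh y; positivity
  have hF : ∀ x, 0 ≤ F x := fun x => hm.le.trans (hlb x)
  have hsplit : ∀ x y : RN N, F x * h x * (F y * h y) * ‖x - y‖ ^ (α - (N : ℝ))
      = F x * F y * k x y := fun x y => by ring
  have hlow : ENNReal.ofReal (m ^ 2) * ∫⁻ x, ∫⁻ y, ENNReal.ofReal (k x y)
      ≤ ∫⁻ x, ∫⁻ y, ENNReal.ofReal (F x * h x * (F y * h y) * ‖x - y‖ ^ (α - (N : ℝ))) := by
    rw [← lintegral_lintegral_const_mul ENNReal.ofReal_ne_top]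
    refine lintegral_mono fun x => lintegral_mono fun y => ?_
    rw [← ENNReal.ofReal_mul (sq_nonneg m), hsplit, sq]
    gcongr
    exacts [hk x y, hF x, hlb x, hlb y]
  have hup : ∫⁻ x, ∫⁻ y, ENNReal.ofReal (F x * h x * (F y * h y) * ‖x - y‖ ^ (α - (N : ℝ)))
      ≤ ENNReal.ofReal (M ^ 2) * ∫⁻ x, ∫⁻ y, ENNReal.ofReal (k x y) := by
    rw [← lintegral_lintegral_const_mul ENNReal.ofReal_ne_top]
    refine lintegral_mono fun x => lintegral_mono fun y => ?_
    rw [← ENNReal.ofReal_mul (sq_nonneg M), hsplit, sq]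
    gcongr
    exacts [hk x y, hF y, (hF x).trans (hub x), hub x, hub y]
  have hm2 : ENNReal.ofReal (m ^ 2) ≠ 0 := (ENNReal.ofReal_pos.mpr (by positivity)).ne'
  have key := toReal_le_toReal_mul_of_mul_le_of_le_mul hm2 ENNReal.ofReal_ne_top hlow hup
  rw [ENNReal.toReal_ofReal (sq_nonneg M)] at key
  unfold rieszD
  calc _ ≤ rieszA N α * (M ^ 2 * (∫⁻ x, ∫⁻ y, ENNReal.ofReal (k x y)).toReal) := by gcongr
    _ = _ := by ring

lemma exists_mul_rpow_le_mul_sq_add (c : ℝ) {ε β : ℝ} (hε : 0 < ε) (hβ0 : 0 ≤ β)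
    (hβ2 : β < 2) : ∃ K, ∀ x : ℝ, 0 ≤ x → c * x ^ β ≤ ε * x ^ 2 + K := by
  set R := (|c| / ε) ^ (2 - β)⁻¹
  have hR : 0 ≤ R := by positivity
  refine ⟨|c| * R ^ β, fun x hx => ?_⟩
  have habs : c * x ^ β ≤ |c| * x ^ β := by gcongr; exact le_abs_self c
  rcases le_or_gt x R with hxR | hRx
  · have : |c| * x ^ β ≤ |c| * R ^ β := by gcongr
    nlinarith [sq_nonneg x]
  · have hRpow : R ^ (2 - β) = |c| / ε := by
      rw [← Real.rpow_mul (by positivity), inv_mul_cancel₀ (by linarith), Real.rpow_one]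
    have hc : |c| ≤ ε * x ^ (2 - β) := by
      rw [← div_le_iff₀' hε, ← hRpow]
      gcongr
    have hsq : x ^ 2 = x ^ (2 - β) * x ^ β := by
      rw [← Real.rpow_add (hR.trans_lt hRx), sub_add_cancel, Real.rpow_two]
    have : |c| * x ^ β ≤ ε * x ^ 2 := by rw [hsq, ← mul_assoc]; gcongr
    have : 0 ≤ |c| * R ^ β := by positivity
    linarith

lemma exists_le_and_tendsto_atTop_of_sq_sub_le {X : Type*} {S : Set X} {φ J : X → ℝ} {ε K : ℝ}
    (hε : 0 < ε) (hJ : ∀ u ∈ S, ε * φ u ^ 2 - K ≤ J u) :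
    (∃ M, ∀ u ∈ S, M ≤ J u) ∧
      ∀ u : ℕ → X, (∀ n, u n ∈ S) →
        Tendsto (fun n => φ (u n)) atTop atTop → Tendsto (fun n => J (u n)) atTop atTop := by
  refine ⟨⟨-K, fun u hu => ?_⟩, fun u hu hφ => ?_⟩
  · nlinarith [hJ u hu, sq_nonneg (φ u)]
  · refine tendsto_atTop_mono (fun n => hJ _ (hu n)) ?_
    exact tendsto_atTop_add_const_right _ _
      (((tendsto_pow_atTop two_ne_zero).const_mul_atTop hε).comp hφ)

section Exponents

variable {N : ℕ} {s α : ℝ}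

lemma lt_upper_critical_exponent (hs0 : 0 < s) (hN : 2 * s < N) (hα0 : 0 < α) {t : ℝ}
    (ht : t < ((N : ℝ) + 2 * s + α) / N) : t < ((N : ℝ) + α) / ((N : ℝ) - 2 * s) := by
  have hN0 : (0 : ℝ) < N := by linarith
  refine ht.trans_le ?_
  rw [div_le_div_iff₀ hN0 (by linarith)]
  nlinarith [mul_pos hs0 hα0]

lemma gn_power_mem_Ico (hs0 : 0 < s) (hN : 2 * s < N) {p : ℝ}
    (hp₁ : ((N : ℝ) + α) / N ≤ p) (hp₂ : p < ((N : ℝ) + 2 * s + α) / N) :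
    ((N : ℝ) * p - N - α) / s ∈ Set.Ico 0 2 := by
  have hN0 : (0 : ℝ) < N := by linarith
  rw [div_le_iff₀ hN0] at hp₁
  rw [lt_div_iff₀ hN0] at hp₂
  exact ⟨div_nonneg (by linarith) hs0.le, by rw [div_lt_iff₀ hs0]; linarith⟩

end Exponents

lemma Jfun_ge_of_rieszD_le {N : ℕ} {s Cns α q p finf fmax ginf gmax Bq Bp : ℝ}
    {V f g u : RN N → ℝ} (hA : 0 ≤ rieszA N α) (hq : 0 < q) (hp : 0 < p) (hV0 : ∀ x, 0 ≤ V x)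
    (hfinf : 0 < finf) (hflb : ∀ x, finf ≤ f x) (hfub : ∀ x, f x ≤ fmax)
    (hginf : 0 < ginf) (hglb : ∀ x, ginf ≤ g x) (hgub : ∀ x, g x ≤ gmax)
    (hDq : rieszD N α (fun x => |u x| ^ q) (fun x => |u x| ^ q) ≤ Bq)
    (hDp : rieszD N α (fun x => |u x| ^ p) (fun x => |u x| ^ p) ≤ Bp) :
    gnormSq N s Cns u / 2 - fmax ^ 2 * Bq / (2 * q) - gmax ^ 2 * Bp / (2 * p)
      ≤ Jfun N s Cns α V f g q p u := by
  have hV : 0 ≤ ∫ x, V x * u x ^ 2 := integral_nonneg fun x => mul_nonneg (hV0 x) (sq_nonneg _)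
  have hQ : Qf N α f q u ≤ fmax ^ 2 * Bq :=
    (rieszD_mul_le hA hfinf (fun x => by positivity) hflb hfub).trans (by gcongr)
  have hP : Qf N α g p u ≤ gmax ^ 2 * Bp :=
    (rieszD_mul_le hA hginf (fun x => by positivity) hglb hgub).trans (by gcongr)
  have hQ' : Qf N α f q u / (2 * q) ≤ fmax ^ 2 * Bq / (2 * q) := by gcongr
  have hP' : Qf N α g p u / (2 * p) ≤ gmax ^ 2 * Bp / (2 * p) := by gcongr
  unfold Jfun
  linarith

lemma exists_quarter_gnorm_sq_sub_le_Jfun {N : ℕ} {s Cns α q p finf fmax ginf gmax : ℝ}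
    {V f g : RN N → ℝ} (hs0 : 0 < s) (hN : 2 * s < N) (hα0 : 0 < α) (hαN : α < N)
    (hq : q = ((N : ℝ) + α) / N) (hqp : q < p) (hp : p < ((N : ℝ) + 2 * s + α) / N)
    (hV0 : ∀ x, 0 ≤ V x)
    (hfinf : 0 < finf) (hflb : ∀ x, finf ≤ f x) (hfub : ∀ x, f x ≤ fmax)
    (hginf : 0 < ginf) (hglb : ∀ x, ginf ≤ g x) (hgub : ∀ x, g x ≤ gmax)
    (hGN : ∀ t : ℝ, ((N : ℝ) + α) / N ≤ t → t < ((N : ℝ) + α) / ((N : ℝ) - 2 * s) →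
      ∃ Cgn : ℝ, 0 < Cgn ∧ ∀ u ∈ HsSet N s Cns,
        rieszD N α (fun x => |u x| ^ t) (fun x => |u x| ^ t) ≤
          Cgn * gnorm N s Cns u ^ (2 * t * (((N : ℝ) * t - (N : ℝ) - α) / (2 * t * s)))
            * (∫ x : RN N, (u x) ^ 2) ^ (t * (1 - ((N : ℝ) * t - (N : ℝ) - α) / (2 * t * s))))
    (a : ℝ) :
    ∃ K, ∀ u ∈ Sset N s Cns a, 1 / 4 * gnorm N s Cns u ^ 2 - K ≤ Jfun N s Cns α V f g q p u := by
  have hN0 : (0 : ℝ) < N := by linarith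
  have hq0 : 0 < q := hq ▸ by positivity
  have hp0 : 0 < p := hq0.trans hqp
  have hq_crit : (N : ℝ) * q - N - α = 0 := by rw [hq]; field_simp; ring
  obtain ⟨Cq, -, hCq⟩ := hGN q hq.ge (lt_upper_critical_exponent hs0 hN hα0 (hqp.trans hp))
  obtain ⟨Cp, -, hCp⟩ := hGN p (hq ▸ hqp.le) (lt_upper_critical_exponent hs0 hN hα0 hp)
  have hβ : 2 * p * (((N : ℝ) * p - N - α) / (2 * p * s)) = ((N : ℝ) * p - N - α) / s := by
    field_simp
  set β := ((N : ℝ) * p - N - α) / s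
  obtain ⟨hβ0, hβ2⟩ := gn_power_mem_Ico (α := α) hs0 hN (hq ▸ hqp.le) hp
  set e := p * (1 - ((N : ℝ) * p - N - α) / (2 * p * s))
  obtain ⟨K, hK⟩ := exists_mul_rpow_le_mul_sq_add (gmax ^ 2 * (Cp * a ^ e) / (2 * p))
    (by norm_num : (0 : ℝ) < 1 / 4) hβ0 hβ2
  refine ⟨fmax ^ 2 * (Cq * a ^ q) / (2 * q) + K, fun u ⟨huH, hua⟩ => ?_⟩
  have hDq : rieszD N α (fun x => |u x| ^ q) (fun x => |u x| ^ q) ≤ Cq * a ^ q := by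
    simpa [hua, hq_crit] using hCq u huH
  have hDp : rieszD N α (fun x => |u x| ^ p) (fun x => |u x| ^ p)
      ≤ Cp * gnorm N s Cns u ^ β * a ^ e := by
    simpa only [hua, hβ] using hCp u huH
  have hJ := Jfun_ge_of_rieszD_le (s := s) (Cns := Cns) (V := V) (rieszA_nonneg hα0 hαN)
    hq0 hp0 hV0 hfinf hflb hfub hginf hglb hgub hDq hDp
  have hsq : gnorm N s Cns u ^ 2 = gnormSq N s Cns u := Real.sq_sqrt ENNReal.toReal_nonneg
  have hYoung := hK (gnorm N s Cns u) (Real.sqrt_nonneg _)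
  have : gmax ^ 2 * (Cp * gnorm N s Cns u ^ β * a ^ e) / (2 * p)
      = gmax ^ 2 * (Cp * a ^ e) / (2 * p) * gnorm N s Cns u ^ β := by ring
  linarith

theorem statement3_general
    (N : ℕ) (s Cns α : ℝ)
    (hs0 : 0 < s) (hN : 2 * s < (N : ℝ))
    (hα0 : 0 < α) (hαN : α < (N : ℝ))
    (q p : ℝ) (hq : q = ((N : ℝ) + α) / N) (hqp : q < p)
    (hp : p < ((N : ℝ) + 2 * s + α) / N)
    (V : RN N → ℝ)
    (hV0 : ∀ x, 0 ≤ V x)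
    (f g : RN N → ℝ) (finf fmax ginf gmax : ℝ)
    (hfinf : 0 < finf) (hginf : 0 < ginf)
    (hflb : ∀ x, finf ≤ f x) (hfub : ∀ x, f x ≤ fmax)
    (hglb : ∀ x, ginf ≤ g x) (hgub : ∀ x, g x ≤ gmax)
    (hGN : ∀ t : ℝ, ((N : ℝ) + α) / N ≤ t → t < ((N : ℝ) + α) / ((N : ℝ) - 2 * s) →
      ∃ Cgn : ℝ, 0 < Cgn ∧ ∀ u ∈ HsSet N s Cns,
        rieszD N α (fun x => |u x| ^ t) (fun x => |u x| ^ t) ≤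
          Cgn * gnorm N s Cns u ^ (2 * t * (((N : ℝ) * t - (N : ℝ) - α) / (2 * t * s)))
            * (∫ x : RN N, (u x) ^ 2) ^ (t * (1 - ((N : ℝ) * t - (N : ℝ) - α) / (2 * t * s))))
    (a : ℝ) :
    (∃ M : ℝ, ∀ u ∈ Sset N s Cns a, M ≤ Jfun N s Cns α V f g q p u) ∧
    (∀ u : ℕ → RN N → ℝ, (∀ n, u n ∈ Sset N s Cns a) →
      Tendsto (fun n => gnorm N s Cns (u n)) atTop atTop →
      Tendsto (fun n => Jfun N s Cns α V f g q p (u n)) atTop atTop) := by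
  obtain ⟨K, hK⟩ := exists_quarter_gnorm_sq_sub_le_Jfun hs0 hN hα0 hαN hq hqp hp hV0
    hfinf hflb hfub hginf hglb hgub hGN a
  exact exists_le_and_tendsto_atTop_of_sq_sub_le (by norm_num) hK

/-- Lemma 2.1 (1) of the paper. In the case
`(N+α)/N = q < p < (N+2s+α)/N`, for any `a > 0` the functional `J` is bounded from below
and coercive on `S(a)`. -/
theorem statement3
    (N : ℕ) (s Cns α : ℝ)
    (hs0 : 0 < s) (hs1 : s < 1) (hN : 2 * s < (N : ℝ))
    (hα0 : 0 < α) (hαN : α < (N : ℝ)) (hCns : 0 < Cns)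
    (q p : ℝ) (hq : q = ((N : ℝ) + α) / N) (hqp : q < p)
    (hp : p < ((N : ℝ) + 2 * s + α) / N)
    (V : RN N → ℝ) (Vinf : ℝ)
    (hVmeas : Measurable V)
    (hV0 : ∀ x, 0 ≤ V x) (hVub : ∀ x, V x ≤ Vinf)
    (hVtend : Tendsto V (cocompact (RN N)) (𝓝 Vinf))
    (f g : RN N → ℝ) (finf fmax ginf gmax : ℝ)
    (hfmeas : Measurable f) (hgmeas : Measurable g)
    (hfinf : 0 < finf) (hginf : 0 < ginf)
    (hftend : Tendsto f (cocompact (RN N)) (𝓝 finf))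
    (hgtend : Tendsto g (cocompact (RN N)) (𝓝 ginf))
    (hflb : ∀ x, finf ≤ f x) (hfub : ∀ x, f x ≤ fmax)
    (hglb : ∀ x, ginf ≤ g x) (hgub : ∀ x, g x ≤ gmax)
    (hfmax : fmax = ⨆ x, f x) (hgmax : gmax = ⨆ x, g x)
    (hGN : ∀ t : ℝ, ((N : ℝ) + α) / N ≤ t → t < ((N : ℝ) + α) / ((N : ℝ) - 2 * s) →
      ∃ Cgn : ℝ, 0 < Cgn ∧ ∀ u ∈ HsSet N s Cns,
        rieszD N α (fun x => |u x| ^ t) (fun x => |u x| ^ t) ≤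
          Cgn * gnorm N s Cns u ^ (2 * t * (((N : ℝ) * t - (N : ℝ) - α) / (2 * t * s)))
            * (∫ x : RN N, (u x) ^ 2) ^ (t * (1 - ((N : ℝ) * t - (N : ℝ) - α) / (2 * t * s))))
    (a : ℝ) (ha : 0 < a) :
    (∃ M : ℝ, ∀ u ∈ Sset N s Cns a, M ≤ Jfun N s Cns α V f g q p u) ∧
    (∀ u : ℕ → RN N → ℝ, (∀ n, u n ∈ Sset N s Cns a) →
      Tendsto (fun n => gnorm N s Cns (u n)) atTop atTop →
      Tendsto (fun n => Jfun N s Cns α V f g q p (u n)) atTop atTop) :=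
  statement3_general N s Cns α hs0 hN hα0 hαN q p hq hqp hp V hV0 f g finf fmax ginf gmax hfinf
    hginf hflb hfub hglb hgub hGN a
end
end

section
/- Suppose (N+α)/N < q < p = (N+2s+α)/N and that V, f, g satisfy (V), (f), (g). Then for any a with 0 < a < a* := (p / (C_{α,p} g_max²))^{1/(p−1)}, one has m(a) ≤ m_∞(a). -/
open MeasureTheory Filter Topology
open scoped ENNReal

noncomputable section

/-!
Since `V ≤ V_∞`, `f ≥ f_∞` and `g ≥ g_∞`, we have `J ≤ J_∞` on `S(a)`, so `m(a) ≤ m_∞(a)` as soon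
as `J` is bounded below on `S(a)` (an `sInf` of a set unbounded below is `0`, so this is needed).
Boundedness comes from the Gagliardo–Nirenberg bounds: `p` is mass critical, so
`P(u) ≤ g_max² C_{α,p} a^{p-1} ‖u‖²`, which `a < a*` makes smaller than `p ‖u‖²`, while
`Q(u) ≲ ‖u‖^θ` with `θ = 2qγ_{q,s} < 2`. Hence `J(u) ≥ ε ‖u‖² - K ‖u‖^θ` with `ε > 0`.
-/

lemma rieszA_pos {N : ℕ} {α : ℝ} (hα0 : 0 < α) (hαN : α < N) : 0 < rieszA N α := by
  have hΓ₁ : 0 < Real.Gamma (((N : ℝ) - α) / 2) := Real.Gamma_pos_of_pos (by linarith)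
  have hΓ₂ : 0 < Real.Gamma (α / 2) := Real.Gamma_pos_of_pos (by linarith)
  unfold rieszA
  positivity

lemma ofReal_mul_lintegral_lintegral {X : Type*} [MeasurableSpace X] (μ : Measure X)
    {c : ℝ} (hc : 0 ≤ c) (φ : X → X → ℝ) :
    ENNReal.ofReal c * ∫⁻ x, ∫⁻ y, ENNReal.ofReal (φ x y) ∂μ ∂μ
      = ∫⁻ x, ∫⁻ y, ENNReal.ofReal (c * φ x y) ∂μ ∂μ := by
  simp_rw [ENNReal.ofReal_mul hc, lintegral_const_mul' _ _ ENNReal.ofReal_ne_top]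

lemma toReal_mem_Icc_of_le_of_le {L L' : ℝ≥0∞} {c d : ℝ} (hc : 0 < c) (hd : 0 ≤ d)
    (hlo : ENNReal.ofReal c * L ≤ L') (hhi : L' ≤ ENNReal.ofReal d * L) :
    L'.toReal ∈ Set.Icc (c * L.toReal) (d * L.toReal) := by
  rcases eq_or_ne L ⊤ with rfl | hL
  · have : L' = ⊤ := top_unique (by simpa [ENNReal.mul_top, hc] using hlo)
    simp [this]
  · have hL' : L' ≠ ⊤ := ne_top_of_le_ne_top (ENNReal.mul_ne_top ENNReal.ofReal_ne_top hL) hhi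
    constructor
    · simpa [ENNReal.toReal_mul, hc.le] using ENNReal.toReal_mono hL' hlo
    · simpa [ENNReal.toReal_mul, hd] using
        ENNReal.toReal_mono (ENNReal.mul_ne_top ENNReal.ofReal_ne_top hL) hhi

lemma rieszD_mul_mem_Icc {N : ℕ} {α c d : ℝ} {F G : RN N → ℝ} (hA : 0 ≤ rieszA N α)
    (hG : ∀ x, 0 ≤ G x) (hc : 0 < c) (hcF : ∀ x, c ≤ F x) (hFd : ∀ x, F x ≤ d) :
    rieszD N α (fun x => F x * G x) (fun x => F x * G x)
      ∈ Set.Icc (c ^ 2 * rieszD N α G G) (d ^ 2 * rieszD N α G G) := by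
  have hF : ∀ x, 0 ≤ F x := fun x => hc.le.trans (hcF x)
  have hk : ∀ x y : RN N, 0 ≤ G x * G y * ‖x - y‖ ^ (α - N) := fun x y =>
    mul_nonneg (mul_nonneg (hG x) (hG y)) (Real.rpow_nonneg (norm_nonneg _) _)
  have hlo : ∀ x y : RN N, c ^ 2 * (G x * G y * ‖x - y‖ ^ (α - N))
      ≤ F x * G x * (F y * G y) * ‖x - y‖ ^ (α - N) := fun x y => by
    have : c ^ 2 ≤ F x * F y := by
      rw [sq]; exact mul_le_mul (hcF x) (hcF y) hc.le (hF x)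
    nlinarith [hk x y]
  have hhi : ∀ x y : RN N, F x * G x * (F y * G y) * ‖x - y‖ ^ (α - N)
      ≤ d ^ 2 * (G x * G y * ‖x - y‖ ^ (α - N)) := fun x y => by
    have : F x * F y ≤ d ^ 2 := by
      rw [sq]; exact mul_le_mul (hFd x) (hFd y) (hF y) ((hF x).trans (hFd x))
    nlinarith [hk x y]
  have hd : 0 ≤ d ^ 2 := sq_nonneg d
  obtain ⟨h₁, h₂⟩ := toReal_mem_Icc_of_le_of_le (by positivity : 0 < c ^ 2) hd
    (L := ∫⁻ x : RN N, ∫⁻ y : RN N, ENNReal.ofReal (G x * G y * ‖x - y‖ ^ (α - N)))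
    (L' := ∫⁻ x : RN N, ∫⁻ y : RN N,
      ENNReal.ofReal (F x * G x * (F y * G y) * ‖x - y‖ ^ (α - N)))
    (by
      rw [ofReal_mul_lintegral_lintegral _ (sq_nonneg c)]
      exact lintegral_mono fun x => lintegral_mono fun y => ENNReal.ofReal_le_ofReal (hlo x y))
    (by
      rw [ofReal_mul_lintegral_lintegral _ hd]
      exact lintegral_mono fun x => lintegral_mono fun y => ENNReal.ofReal_le_ofReal (hhi x y))
  simp only [rieszD, Set.mem_Icc, mul_left_comm _ (rieszA N α)]
  exact ⟨mul_le_mul_of_nonneg_left h₁ hA, mul_le_mul_of_nonneg_left h₂ hA⟩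

/-- The exponent `γ_{t,s}`. -/
def gnGamma (N : ℕ) (s α t : ℝ) : ℝ := ((N : ℝ) * t - N - α) / (2 * t * s)

def RieszGNBound (N : ℕ) (s Cns α t C : ℝ) : Prop :=
  ∀ u ∈ HsSet N s Cns, rieszD N α (fun x => |u x| ^ t) (fun x => |u x| ^ t) ≤
    C * gnorm N s Cns u ^ (2 * t * gnGamma N s α t)
      * (∫ x : RN N, (u x) ^ 2) ^ (t * (1 - gnGamma N s α t))

lemma two_mul_mul_gnGamma {N : ℕ} {s α t : ℝ} (hs : s ≠ 0) (ht : t ≠ 0) :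
    2 * t * gnGamma N s α t = ((N : ℝ) * t - N - α) / s := by
  unfold gnGamma; field_simp

lemma two_mul_mul_gnGamma_mem_Ioo {N : ℕ} {s α q : ℝ} (hs : 0 < s) (hN : 0 < N) (hα : 0 ≤ α)
    (hq : ((N : ℝ) + α) / N < q) (hq' : q < ((N : ℝ) + 2 * s + α) / N) :
    2 * q * gnGamma N s α q ∈ Set.Ioo 0 2 := by
  have hN' : (0 : ℝ) < N := Nat.cast_pos.mpr hN
  rw [div_lt_iff₀ hN'] at hq
  rw [lt_div_iff₀ hN'] at hq'
  have hq0 : q ≠ 0 := by rintro rfl; linarith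
  rw [two_mul_mul_gnGamma hs.ne' hq0, Set.mem_Ioo, lt_div_iff₀ hs, div_lt_iff₀ hs]
  constructor <;> linarith

lemma gnGamma_massCritical {N : ℕ} {s α p : ℝ} (hs : s ≠ 0) (hN : N ≠ 0)
    (hp : p = ((N : ℝ) + 2 * s + α) / N) (hp0 : p ≠ 0) :
    2 * p * gnGamma N s α p = 2 ∧ p * (1 - gnGamma N s α p) = p - 1 := by
  have hNp : (N : ℝ) * p = N + 2 * s + α := by rw [hp]; field_simp
  unfold gnGamma
  rw [hNp]
  constructor <;> field_simp <;> ring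

lemma lt_div_sub_of_lt_massCritical {N : ℕ} {s α q : ℝ} (hs : 0 ≤ s) (hα : 0 ≤ α)
    (hN : 2 * s < N) (hq : q < ((N : ℝ) + 2 * s + α) / N) :
    q < ((N : ℝ) + α) / (N - 2 * s) := by
  have hN' : (0 : ℝ) < N := by linarith
  refine hq.trans_le ?_
  rw [div_le_div_iff₀ hN' (by linarith)]
  nlinarith

lemma exists_forall_le_mul_rpow_two_sub_mul_rpow {ε K θ : ℝ} (hε : 0 < ε) (hK : 0 ≤ K)
    (hθ : θ ∈ Set.Ioo 0 2) :
    ∃ B, ∀ X : ℝ, 0 ≤ X → B ≤ ε * X ^ (2 : ℝ) - K * X ^ θ := by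
  obtain ⟨hθ0, hθ2⟩ := hθ
  -- below `R` the term `K X^θ` is at most `K R^θ`; above it `ε X²` dominates
  set R := (K / ε) ^ (2 - θ)⁻¹
  have hR : 0 ≤ R := Real.rpow_nonneg (div_nonneg hK hε.le) _
  refine ⟨-(K * R ^ θ), fun X hX => ?_⟩
  have hεX : 0 ≤ ε * X ^ (2 : ℝ) := mul_nonneg hε.le (Real.rpow_nonneg hX _)
  rcases le_or_gt X R with hXR | hRX
  · have := mul_le_mul_of_nonneg_left (Real.rpow_le_rpow hX hXR hθ0.le) hK
    linarith
  · have hX0 : 0 < X := hR.trans_lt hRX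
    have hKX : K ≤ ε * X ^ (2 - θ) := by
      rw [← div_le_iff₀' hε, ← Real.rpow_inv_le_iff_of_pos (div_nonneg hK hε.le) hX
        (by linarith)]
      exact hRX.le
    have : K * X ^ θ ≤ ε * X ^ (2 : ℝ) := by
      calc K * X ^ θ ≤ ε * X ^ (2 - θ) * X ^ θ :=
            mul_le_mul_of_nonneg_right hKX (Real.rpow_nonneg hX _)
        _ = ε * X ^ (2 : ℝ) := by rw [mul_assoc, ← Real.rpow_add hX0]; norm_num
    have : 0 ≤ K * R ^ θ := mul_nonneg hK (Real.rpow_nonneg hR _)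
    linarith

lemma csInf_image_le_csInf_image {β α : Type*} [ConditionallyCompleteLattice α] {s : Set β}
    {φ ψ : β → α} (hφ : BddBelow (φ '' s)) (h : ∀ x ∈ s, φ x ≤ ψ x) :
    sInf (φ '' s) ≤ sInf (ψ '' s) := by
  rw [Set.image_eq_range] at hφ ⊢
  rw [Set.image_eq_range]
  exact ciInf_mono hφ fun x => h x x.2

section Energy

variable {N : ℕ} {s Cns α q p finf fmax ginf gmax : ℝ} {V f g : RN N → ℝ}

lemma Jfun_le_Jinf {Vinf : ℝ} {u : RN N → ℝ} (hA : 0 ≤ rieszA N α) (hq : 0 < q) (hp : 0 < p)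
    (hV0 : ∀ x, 0 ≤ V x) (hVub : ∀ x, V x ≤ Vinf)
    (hfinf : 0 < finf) (hflb : ∀ x, finf ≤ f x) (hfub : ∀ x, f x ≤ fmax)
    (hginf : 0 < ginf) (hglb : ∀ x, ginf ≤ g x) (hgub : ∀ x, g x ≤ gmax)
    (hu : MemLp u 2) :
    Jfun N s Cns α V f g q p u ≤ Jinf N s Cns α Vinf finf ginf q p u := by
  have hQ : finf ^ 2 / (2 * q) * rieszD N α (fun x => |u x| ^ q) (fun x => |u x| ^ q)
      ≤ Qf N α f q u / (2 * q) := by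
    rw [div_mul_eq_mul_div]
    gcongr
    exact (rieszD_mul_mem_Icc hA (fun x => by positivity) hfinf hflb hfub).1
  have hP : ginf ^ 2 / (2 * p) * rieszD N α (fun x => |u x| ^ p) (fun x => |u x| ^ p)
      ≤ Qf N α g p u / (2 * p) := by
    rw [div_mul_eq_mul_div]
    gcongr
    exact (rieszD_mul_mem_Icc hA (fun x => by positivity) hginf hglb hgub).1
  have hV : ∫ x, V x * u x ^ 2 ≤ Vinf * ∫ x, u x ^ 2 := by
    rw [← integral_const_mul]
    exact integral_mono_of_nonneg (ae_of_all _ fun x => mul_nonneg (hV0 x) (sq_nonneg _))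
      (hu.integrable_sq.const_mul Vinf)
      (ae_of_all _ fun x => mul_le_mul_of_nonneg_right (hVub x) (sq_nonneg _))
  unfold Jfun Jinf
  linarith

lemma le_Jfun_of_mem_Sset {a Cq Cp : ℝ} {u : RN N → ℝ} (hA : 0 ≤ rieszA N α) (hq : 0 < q)
    (hp : 0 < p) (hV0 : ∀ x, 0 ≤ V x)
    (hfinf : 0 < finf) (hflb : ∀ x, finf ≤ f x) (hfub : ∀ x, f x ≤ fmax)
    (hginf : 0 < ginf) (hglb : ∀ x, ginf ≤ g x) (hgub : ∀ x, g x ≤ gmax)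
    (hCq : RieszGNBound N s Cns α q Cq) (hCp : RieszGNBound N s Cns α p Cp)
    (hp2 : 2 * p * gnGamma N s α p = 2) (hp1 : p * (1 - gnGamma N s α p) = p - 1)
    (hu : u ∈ Sset N s Cns a) :
    (1 / 2 - Cp * gmax ^ 2 * a ^ (p - 1) / (2 * p)) * gnorm N s Cns u ^ (2 : ℝ)
      - fmax ^ 2 * Cq * a ^ (q * (1 - gnGamma N s α q)) / (2 * q)
        * gnorm N s Cns u ^ (2 * q * gnGamma N s α q)
      ≤ Jfun N s Cns α V f g q p u := by
  obtain ⟨huHs, hua⟩ := hu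
  set X := gnorm N s Cns u
  have hX : X ^ (2 : ℝ) = gnormSq N s Cns u := by
    rw [Real.rpow_two]; exact Real.sq_sqrt ENNReal.toReal_nonneg
  have hQ : Qf N α f q u / (2 * q)
      ≤ fmax ^ 2 * Cq * a ^ (q * (1 - gnGamma N s α q)) / (2 * q)
        * X ^ (2 * q * gnGamma N s α q) := by
    rw [div_mul_eq_mul_div]
    gcongr
    calc Qf N α f q u ≤ fmax ^ 2 * rieszD N α (fun x => |u x| ^ q) (fun x => |u x| ^ q) :=
          (rieszD_mul_mem_Icc hA (fun x => by positivity) hfinf hflb hfub).2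
      _ ≤ fmax ^ 2 * (Cq * X ^ (2 * q * gnGamma N s α q) * a ^ (q * (1 - gnGamma N s α q))) := by
          gcongr; exact hua ▸ hCq u huHs
      _ = _ := by ring
  have hP : Qf N α g p u / (2 * p) ≤ Cp * gmax ^ 2 * a ^ (p - 1) / (2 * p) * X ^ (2 : ℝ) := by
    rw [div_mul_eq_mul_div]
    gcongr
    calc Qf N α g p u ≤ gmax ^ 2 * rieszD N α (fun x => |u x| ^ p) (fun x => |u x| ^ p) :=
          (rieszD_mul_mem_Icc hA (fun x => by positivity) hginf hglb hgub).2
      _ ≤ gmax ^ 2 * (Cp * X ^ (2 : ℝ) * a ^ (p - 1)) := by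
          gcongr; simpa only [hp2, hp1, hua] using hCp u huHs
      _ = _ := by ring
  have hV : 0 ≤ ∫ x, V x * u x ^ 2 :=
    integral_nonneg fun x => mul_nonneg (hV0 x) (sq_nonneg _)
  unfold Jfun
  rw [← hX]
  linarith

lemma bddBelow_Jfun_image_Sset {a Cq Cp : ℝ} (hA : 0 ≤ rieszA N α) (hq : 0 < q) (hp : 0 < p)
    (ha : 0 ≤ a) (hV0 : ∀ x, 0 ≤ V x)
    (hfinf : 0 < finf) (hflb : ∀ x, finf ≤ f x) (hfub : ∀ x, f x ≤ fmax)
    (hginf : 0 < ginf) (hglb : ∀ x, ginf ≤ g x) (hgub : ∀ x, g x ≤ gmax)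
    (hCq0 : 0 ≤ Cq) (hCq : RieszGNBound N s Cns α q Cq) (hCp : RieszGNBound N s Cns α p Cp)
    (hθ : 2 * q * gnGamma N s α q ∈ Set.Ioo 0 2)
    (hp2 : 2 * p * gnGamma N s α p = 2) (hp1 : p * (1 - gnGamma N s α p) = p - 1)
    (hsmall : Cp * gmax ^ 2 * a ^ (p - 1) < p) :
    BddBelow (Jfun N s Cns α V f g q p '' Sset N s Cns a) := by
  have hε : 0 < 1 / 2 - Cp * gmax ^ 2 * a ^ (p - 1) / (2 * p) := by
    rw [sub_pos, div_lt_iff₀ (by positivity)]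
    linarith
  obtain ⟨B, hB⟩ := exists_forall_le_mul_rpow_two_sub_mul_rpow hε
    (K := fmax ^ 2 * Cq * a ^ (q * (1 - gnGamma N s α q)) / (2 * q)) (by positivity) hθ
  refine ⟨B, ?_⟩
  rintro _ ⟨u, hu, rfl⟩
  exact (hB _ (Real.sqrt_nonneg _)).trans <| le_Jfun_of_mem_Sset hA hq hp hV0 hfinf hflb hfub
    hginf hglb hgub hCq hCp hp2 hp1 hu

end Energy

theorem statement12_general
    (N : ℕ) (s Cns α : ℝ)
    (hs0 : 0 < s) (hN : 2 * s < (N : ℝ))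
    (hα0 : 0 < α) (hαN : α < (N : ℝ))
    (q p : ℝ) (hq : ((N : ℝ) + α) / N < q) (hqp : q < p)
    (hp : p = ((N : ℝ) + 2 * s + α) / N)
    (V : RN N → ℝ) (Vinf : ℝ)
    (hV0 : ∀ x, 0 ≤ V x) (hVub : ∀ x, V x ≤ Vinf)
    (f g : RN N → ℝ) (finf fmax ginf gmax : ℝ)
    (hfinf : 0 < finf) (hginf : 0 < ginf)
    (hflb : ∀ x, finf ≤ f x) (hfub : ∀ x, f x ≤ fmax)
    (hglb : ∀ x, ginf ≤ g x) (hgub : ∀ x, g x ≤ gmax)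
    (hGN : ∀ t : ℝ, ((N : ℝ) + α) / N ≤ t → t < ((N : ℝ) + α) / ((N : ℝ) - 2 * s) →
      ∃ Cgn : ℝ, 0 < Cgn ∧ ∀ u ∈ HsSet N s Cns,
        rieszD N α (fun x => |u x| ^ t) (fun x => |u x| ^ t) ≤
          Cgn * gnorm N s Cns u ^ (2 * t * (((N : ℝ) * t - (N : ℝ) - α) / (2 * t * s)))
            * (∫ x : RN N, (u x) ^ 2) ^ (t * (1 - ((N : ℝ) * t - (N : ℝ) - α) / (2 * t * s))))
    (Cp : ℝ) (hCp0 : 0 < Cp)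
    (hCp : ∀ u ∈ HsSet N s Cns,
      rieszD N α (fun x => |u x| ^ p) (fun x => |u x| ^ p) ≤
        Cp * gnorm N s Cns u ^ (2 * p * (((N : ℝ) * p - (N : ℝ) - α) / (2 * p * s)))
          * (∫ x : RN N, (u x) ^ 2) ^ (p * (1 - ((N : ℝ) * p - (N : ℝ) - α) / (2 * p * s))))
    (a : ℝ) (ha0 : 0 < a) (ha : a < (p / (Cp * gmax ^ 2)) ^ (1 / (p - 1))) :
    mval N s Cns α V f g q p a ≤ mvalInf N s Cns α Vinf finf ginf q p a := by
  have hN0 : 0 < N := by exact_mod_cast (by linarith : (0 : ℝ) < N)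
  have hA : 0 ≤ rieszA N α := (rieszA_pos hα0 hαN).le
  have hq0 : 0 < q := (div_pos (by linarith) (by linarith)).trans hq
  have hp1 : 1 < p := by rw [hp, one_lt_div (by linarith)]; linarith
  obtain ⟨hpγ2, hpγ1⟩ := gnGamma_massCritical (α := α) hs0.ne' hN0.ne' hp (by linarith)
  obtain ⟨Cq, hCq0, hCq⟩ :=
    hGN q hq.le (lt_div_sub_of_lt_massCritical hs0.le hα0.le hN (hp ▸ hqp))
  have hgmax : 0 < gmax := hginf.trans_le ((hglb 0).trans (hgub 0))
  have hsmall : Cp * gmax ^ 2 * a ^ (p - 1) < p := by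
    rw [← lt_div_iff₀' (by positivity), ← Real.lt_rpow_inv_iff_of_pos ha0.le (by positivity)
      (by linarith), ← one_div]
    exact ha
  refine csInf_image_le_csInf_image ?_ fun u hu =>
    Jfun_le_Jinf hA hq0 (by linarith) hV0 hVub hfinf hflb hfub hginf hglb hgub hu.1.1
  exact bddBelow_Jfun_image_Sset hA hq0 (by linarith) ha0.le hV0 hfinf hflb hfub hginf hglb hgub
    hCq0.le hCq hCp (two_mul_mul_gnGamma_mem_Ioo hs0 hN0 hα0.le hq (hp ▸ hqp)) hpγ2 hpγ1 hsmall

/-- Lemma 2.5 (2) of the paper. In the case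
`(N+α)/N < q < p = (N+2s+α)/N`, for any `0 < a < a* = (p/(C_{α,p} g_max²))^{1/(p−1)}`
one has `m(a) ≤ m_∞(a)`. -/
theorem statement12
    (N : ℕ) (s Cns α : ℝ)
    (hs0 : 0 < s) (hs1 : s < 1) (hN : 2 * s < (N : ℝ))
    (hα0 : 0 < α) (hαN : α < (N : ℝ)) (hCns : 0 < Cns)
    (q p : ℝ) (hq : ((N : ℝ) + α) / N < q) (hqp : q < p)
    (hp : p = ((N : ℝ) + 2 * s + α) / N)
    (V : RN N → ℝ) (Vinf : ℝ)
    (hVmeas : Measurable V)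
    (hV0 : ∀ x, 0 ≤ V x) (hVub : ∀ x, V x ≤ Vinf)
    (hVtend : Tendsto V (cocompact (RN N)) (𝓝 Vinf))
    (f g : RN N → ℝ) (finf fmax ginf gmax : ℝ)
    (hfmeas : Measurable f) (hgmeas : Measurable g)
    (hfinf : 0 < finf) (hginf : 0 < ginf)
    (hftend : Tendsto f (cocompact (RN N)) (𝓝 finf))
    (hgtend : Tendsto g (cocompact (RN N)) (𝓝 ginf))
    (hflb : ∀ x, finf ≤ f x) (hfub : ∀ x, f x ≤ fmax)
    (hglb : ∀ x, ginf ≤ g x) (hgub : ∀ x, g x ≤ gmax)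
    (hfmax : fmax = ⨆ x, f x) (hgmax : gmax = ⨆ x, g x)
    (hGN : ∀ t : ℝ, ((N : ℝ) + α) / N ≤ t → t < ((N : ℝ) + α) / ((N : ℝ) - 2 * s) →
      ∃ Cgn : ℝ, 0 < Cgn ∧ ∀ u ∈ HsSet N s Cns,
        rieszD N α (fun x => |u x| ^ t) (fun x => |u x| ^ t) ≤
          Cgn * gnorm N s Cns u ^ (2 * t * (((N : ℝ) * t - (N : ℝ) - α) / (2 * t * s)))
            * (∫ x : RN N, (u x) ^ 2) ^ (t * (1 - ((N : ℝ) * t - (N : ℝ) - α) / (2 * t * s))))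
    (Cp : ℝ) (hCp0 : 0 < Cp)
    (hCp : ∀ u ∈ HsSet N s Cns,
      rieszD N α (fun x => |u x| ^ p) (fun x => |u x| ^ p) ≤
        Cp * gnorm N s Cns u ^ (2 * p * (((N : ℝ) * p - (N : ℝ) - α) / (2 * p * s)))
          * (∫ x : RN N, (u x) ^ 2) ^ (p * (1 - ((N : ℝ) * p - (N : ℝ) - α) / (2 * p * s))))
    (hCpopt : ∀ C' : ℝ, (∀ u ∈ HsSet N s Cns,
      rieszD N α (fun x => |u x| ^ p) (fun x => |u x| ^ p) ≤
        C' * gnorm N s Cns u ^ (2 * p * (((N : ℝ) * p - (N : ℝ) - α) / (2 * p * s)))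
          * (∫ x : RN N, (u x) ^ 2) ^ (p * (1 - ((N : ℝ) * p - (N : ℝ) - α) / (2 * p * s)))) →
      Cp ≤ C')
    (a : ℝ) (ha0 : 0 < a) (ha : a < (p / (Cp * gmax ^ 2)) ^ (1 / (p - 1))) :
    mval N s Cns α V f g q p a ≤ mvalInf N s Cns α Vinf finf ginf q p a :=
  statement12_general N s Cns α hs0 hN hα0 hαN q p hq hqp hp V Vinf hV0 hVub f g finf fmax ginf gmax
    hfinf hginf hflb hfub hglb hgub hGN Cp hCp0 hCp a ha0 ha
end
end
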